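/- Let n ∈ ℕ, h¹, h² ∈ ℝⁿ with h¹ ≠ 0 or h² ≠ 0 allowed, and w¹, w² > 0. For κ < 0 define the conformal factor λ_x^κ = 2/(1 + κ‖x‖²), the scalar Möbius product r ⊗_κ y = exp₀(r log₀(y)) (with exp₀(v) = tanh(√|κ|‖v‖)·v/(√|κ|‖v‖), log₀(y) = artanh(√|κ|‖y‖)·y/(√|κ|‖y‖), both mapping 0 to 0), and the hyperbolic residual f_HR^κ(h¹, h², w¹, w²) = (1/2) ⊗_κ ( (w¹ λ_{h¹}^κ h¹ + w² λ_{h²}^κ h²) / (w¹(λ_{h¹}^κ − 1) + w²(λ_{h²}^κ − 1)) ). If w¹ h¹ + w² h² ≠ 0, then as κ → 0⁻, f_HR^κ(h¹, h², w¹, w²) tends to the weighted arithmetic mean (w¹ h¹ + w² h²)/(w¹ + w²). -/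

import Mathlib

/-!
Both `exp₀` and `log₀` have the shape `v ↦ (F (s‖v‖) / (s‖v‖)) • v` with `s = √|κ|`, `F 0 = 0` and
`F' 0 = 1` (`F = tanh`, resp. `artanh`). Since `F t / t → 1` as `t → 0`, such a map sends any family
`v κ → v₀ ≠ 0` to a family tending to `v₀` as `κ → 0`; hence `(1/2) ⊗_κ y κ → y₀ / 2`. The conformal
factors tend to `2`, so the argument of the Möbius product tends to `2 (w¹h¹ + w²h²)/(w¹ + w²)`.
-/

noncomputable section
open Classical Filter

/-- The inverse hyperbolic tangent `artanh = tanh⁻¹` on `(−1, 1)`. -/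
def artanh (x : ℝ) : ℝ := (1 / 2) * Real.log ((1 + x) / (1 - x))

/-- The exponential map of the Poincaré ball of curvature `κ` based at the origin. -/
def expZero (κ : ℝ) {n : ℕ} (v : EuclideanSpace ℝ (Fin n)) : EuclideanSpace ℝ (Fin n) :=
  if v = 0 then 0
  else (Real.tanh (Real.sqrt |κ| * ‖v‖) / (Real.sqrt |κ| * ‖v‖)) • v

/-- The logarithmic map of the Poincaré ball of curvature `κ` based at the origin. -/
def logZero (κ : ℝ) {n : ℕ} (y : EuclideanSpace ℝ (Fin n)) : EuclideanSpace ℝ (Fin n) :=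
  if y = 0 then 0
  else (artanh (Real.sqrt |κ| * ‖y‖) / (Real.sqrt |κ| * ‖y‖)) • y

/-- The Möbius scalar multiplication `r ⊗_κ y = exp₀(r log₀(y))`. -/
def mobiusScalarMul (κ : ℝ) {n : ℕ} (r : ℝ) (y : EuclideanSpace ℝ (Fin n)) :
    EuclideanSpace ℝ (Fin n) :=
  expZero κ (r • logZero κ y)

/-- The conformal factor `λ_x^κ = 2/(1 + κ‖x‖²)`. -/
def conformalFactor (κ : ℝ) {n : ℕ} (x : EuclideanSpace ℝ (Fin n)) : ℝ :=
  2 / (1 + κ * ‖x‖ ^ 2)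

/-- The two-point hyperbolic residual (Möbius gyromidpoint)
`f_HR^κ(h¹, h², w¹, w²) = (1/2) ⊗_κ ((w¹λ₁h¹ + w²λ₂h²)/(w¹(λ₁−1) + w²(λ₂−1)))`. -/
def hypResidual (κ : ℝ) {n : ℕ} (h₁ h₂ : EuclideanSpace ℝ (Fin n)) (w₁ w₂ : ℝ) :
    EuclideanSpace ℝ (Fin n) :=
  mobiusScalarMul κ (1 / 2)
    ((w₁ * (conformalFactor κ h₁ - 1) + w₂ * (conformalFactor κ h₂ - 1))⁻¹ •
      ((w₁ * conformalFactor κ h₁) • h₁ + (w₂ * conformalFactor κ h₂) • h₂))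

open Topology

lemma HasDerivAt.tendsto_div_self {F : ℝ → ℝ} {F' : ℝ} (hF : HasDerivAt F F' 0) (hF₀ : F 0 = 0) :
    Tendsto (fun t => F t / t) (𝓝[≠] 0) (𝓝 F') := by
  simpa [hF₀, div_eq_inv_mul] using hF.tendsto_slope_zero

lemma hasDerivAt_tanh_zero : HasDerivAt Real.tanh 1 0 := by
  have h := (Real.hasDerivAt_sinh 0).div (Real.hasDerivAt_cosh 0) (Real.cosh_pos 0).ne'
  rw [show Real.sinh / Real.cosh = Real.tanh by ext; simp [Real.tanh_eq_sinh_div_cosh]] at h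
  simpa using h

lemma hasDerivAt_artanh_zero : HasDerivAt artanh 1 0 := by
  have hquot : HasDerivAt (fun x : ℝ => (1 + x) / (1 - x)) 2 0 := by
    have h := ((hasDerivAt_id (0 : ℝ)).const_add 1).div ((hasDerivAt_id (0 : ℝ)).const_sub 1)
      (by norm_num)
    norm_num at h
    exact h
  have h := (hquot.log (by norm_num)).const_mul (1 / 2 : ℝ)
  norm_num at h
  exact h

section Radial

variable {α E : Type*} [NormedAddCommGroup E] [NormedSpace ℝ E]

lemma tendsto_radial_div_self_smul {F : ℝ → ℝ} (hF : HasDerivAt F 1 0) (hF₀ : F 0 = 0)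
    {l : Filter α} {s : α → ℝ} {v : α → E} {v₀ : E}
    (hs : Tendsto s l (𝓝[≠] 0)) (hv : Tendsto v l (𝓝 v₀)) (hv₀ : v₀ ≠ 0) :
    Tendsto (fun a => (F (s a * ‖v a‖) / (s a * ‖v a‖)) • v a) l (𝓝 v₀) := by
  have hsv : Tendsto (fun a => s a * ‖v a‖) l (𝓝[≠] 0) := by
    refine tendsto_nhdsWithin_iff.2 ⟨?_, ?_⟩
    · simpa using (tendsto_nhds_of_tendsto_nhdsWithin hs).mul hv.norm
    · filter_upwards [eventually_mem_of_tendsto_nhdsWithin hs, hv.eventually_ne hv₀]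
        with a hsa hva
      exact mul_ne_zero hsa (norm_ne_zero_iff.2 hva)
  simpa using ((hF.tendsto_div_self hF₀).comp hsv).smul hv

lemma tendsto_sqrt_abs_nhdsNE : Tendsto (fun κ : ℝ => Real.sqrt |κ|) (𝓝[≠] 0) (𝓝[≠] 0) := by
  refine tendsto_nhdsWithin_iff.2 ⟨?_, ?_⟩
  · have h : Continuous (fun κ : ℝ => Real.sqrt |κ|) := by fun_prop
    simpa using (h.tendsto 0).mono_left nhdsWithin_le_nhds
  · filter_upwards [self_mem_nhdsWithin] with κ hκ
    exact (Real.sqrt_pos.2 (abs_pos.2 hκ)).ne'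

end Radial

section PoincareBall

variable {n : ℕ}

lemma expZero_eq_smul (κ : ℝ) (v : EuclideanSpace ℝ (Fin n)) :
    expZero κ v = (Real.tanh (Real.sqrt |κ| * ‖v‖) / (Real.sqrt |κ| * ‖v‖)) • v := by
  unfold expZero
  split_ifs with hv <;> simp [hv]

lemma logZero_eq_smul (κ : ℝ) (y : EuclideanSpace ℝ (Fin n)) :
    logZero κ y = (artanh (Real.sqrt |κ| * ‖y‖) / (Real.sqrt |κ| * ‖y‖)) • y := by
  unfold logZero
  split_ifs with hy <;> simp [hy]

lemma tendsto_expZero {v : ℝ → EuclideanSpace ℝ (Fin n)} {v₀ : EuclideanSpace ℝ (Fin n)}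
    (hv : Tendsto v (𝓝[≠] 0) (𝓝 v₀)) (hv₀ : v₀ ≠ 0) :
    Tendsto (fun κ => expZero κ (v κ)) (𝓝[≠] 0) (𝓝 v₀) := by
  simpa only [expZero_eq_smul] using
    tendsto_radial_div_self_smul hasDerivAt_tanh_zero Real.tanh_zero tendsto_sqrt_abs_nhdsNE hv hv₀

lemma tendsto_logZero {y : ℝ → EuclideanSpace ℝ (Fin n)} {y₀ : EuclideanSpace ℝ (Fin n)}
    (hy : Tendsto y (𝓝[≠] 0) (𝓝 y₀)) (hy₀ : y₀ ≠ 0) :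
    Tendsto (fun κ => logZero κ (y κ)) (𝓝[≠] 0) (𝓝 y₀) := by
  simpa only [logZero_eq_smul] using
    tendsto_radial_div_self_smul hasDerivAt_artanh_zero (by simp [artanh])
      tendsto_sqrt_abs_nhdsNE hy hy₀

lemma tendsto_mobiusScalarMul {r : ℝ} (hr : r ≠ 0) {y : ℝ → EuclideanSpace ℝ (Fin n)}
    {y₀ : EuclideanSpace ℝ (Fin n)} (hy : Tendsto y (𝓝[≠] 0) (𝓝 y₀)) (hy₀ : y₀ ≠ 0) :
    Tendsto (fun κ => mobiusScalarMul κ r (y κ)) (𝓝[≠] 0) (𝓝 (r • y₀)) :=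
  tendsto_expZero ((tendsto_logZero hy hy₀).const_smul r) (smul_ne_zero hr hy₀)

lemma tendsto_conformalFactor (x : EuclideanSpace ℝ (Fin n)) :
    Tendsto (fun κ => conformalFactor κ x) (𝓝 0) (𝓝 2) := by
  have h : ContinuousAt (fun κ : ℝ => 2 / (1 + κ * ‖x‖ ^ 2)) 0 := by
    fun_prop (disch := norm_num)
  simpa [conformalFactor] using h.tendsto

end PoincareBall

/-- As `κ → 0⁻`, the hyperbolic residual (two-point Möbius gyromidpoint) tends to the
weighted arithmetic mean `(w¹h¹ + w²h²)/(w¹ + w²)`. -/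
theorem hypResidual_tendsto_arithmetic_mean
    (n : ℕ) (h₁ h₂ : EuclideanSpace ℝ (Fin n)) (w₁ w₂ : ℝ)
    (hw₁ : 0 < w₁) (hw₂ : 0 < w₂)
    (hne : w₁ • h₁ + w₂ • h₂ ≠ 0) :
    Tendsto (fun κ : ℝ => hypResidual κ h₁ h₂ w₁ w₂)
      (nhdsWithin 0 (Set.Iio 0))
      (nhds ((w₁ + w₂)⁻¹ • (w₁ • h₁ + w₂ • h₂))) := by
  set m := (w₁ + w₂)⁻¹ • (w₁ • h₁ + w₂ • h₂)
  have hw : w₁ + w₂ ≠ 0 := by positivity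
  have hm : m ≠ 0 := smul_ne_zero (inv_ne_zero hw) hne
  have harg : Tendsto (fun κ =>
      (w₁ * (conformalFactor κ h₁ - 1) + w₂ * (conformalFactor κ h₂ - 1))⁻¹ •
        ((w₁ * conformalFactor κ h₁) • h₁ + (w₂ * conformalFactor κ h₂) • h₂))
      (𝓝 0) (𝓝 ((2 : ℝ) • m)) := by
    have hcf₁ := tendsto_conformalFactor h₁
    have hcf₂ := tendsto_conformalFactor h₂
    convert ((((hcf₁.sub_const 1).const_mul w₁).add ((hcf₂.sub_const 1).const_mul w₂)).inv₀
      (by norm_num [hw])).smul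
      (((hcf₁.const_mul w₁).smul_const h₁).add ((hcf₂.const_mul w₂).smul_const h₂)) using 2
    rw [show w₁ * (2 - 1) + w₂ * (2 - 1) = w₁ + w₂ by ring]
    module
  have hlim := tendsto_mobiusScalarMul (one_div_ne_zero two_ne_zero)
    (harg.mono_left nhdsWithin_le_nhds) (smul_ne_zero two_ne_zero hm)
  rw [smul_smul, one_div_mul_cancel two_ne_zero, one_smul] at hlim
  exact hlim.mono_left (nhdsWithin_mono 0 fun κ hκ => hκ.ne)
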